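/- arXiv:nlin/0412016 — 3 statements merged into one kernel-verified Lean document; each statement's English description precedes it below -/
import Mathlib

section
/- Let w : U → ℂ be holomorphic with w(0) = 0, |w(z)| < 1 and w'(z) ≠ 0 on U, let a_k denote the k-th Taylor coefficient of w at 0, set a = (a_1,…,a_n) ∈ ℂ^n, and let q_k denote the k-th Taylor coefficient at 0 of the holomorphic function z ↦ z/w'(z), with q = (q_1,…,q_n) ∈ ℂ^n. Then for every u ∈ ℝ and every k with 1 ≤ k ≤ n, the k-th Taylor coefficient at 0 of z ↦ (z/w'(z)) · [ (e^{iu}+w(z))/(e^{iu}−w(z)) + 2e^{iu}w(z)/(e^{iu}−w(z))² ] equals q_k + 2∑_{s=1}^{k−1} e^{−isu}(s+1)(A(a)^s q)_k. (Consequently, along the Löwner flow the coefficient vector q(t) of z/∂_z w(z,t) satisfies the linear system q̇ = (E + 2∑_{s=1}^{n−1} e^{−isu(t)}(s+1) A(a(t))^s) q.) -/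
open Complex Metric

/-- The `k`-th Taylor coefficient of `f` at `0`. -/
noncomputable def taylorCoeff (f : ℂ → ℂ) (k : ℕ) : ℂ :=
  iteratedDeriv k f 0 / Nat.factorial k

/-- The lower-triangular nilpotent Toeplitz matrix `A(a)` with `A(a)_{j,k} = a_{j-k}`
(1-indexed) for `j > k` and `0` otherwise. -/
noncomputable def toeplitzA {n : ℕ} (a : Fin n → ℂ) : Matrix (Fin n) (Fin n) ℂ :=
  Matrix.of fun j k =>
    if _ : (k : ℕ) < (j : ℕ) then a ⟨(j : ℕ) - (k : ℕ) - 1, by have := j.isLt; omega⟩ else 0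

/-- The Löwner kernel `p(ζ, u) = (e^{iu} + ζ)/(e^{iu} - ζ)`. -/
noncomputable def lkernel (ζ : ℂ) (u : ℝ) : ℂ :=
  (Complex.exp (u * Complex.I) + ζ) / (Complex.exp (u * Complex.I) - ζ)

/-!
Put `x = w / e^{iu}` and `h = z / w'`. The bracket equals
`2 / (1 - x)² - 1 = 1 + 2 ∑_{s ≥ 1} (s + 1) x^s`, so the `k`-th coefficient of `h` times the bracket
is `q_k + 2 ∑_s e^{-isu} (s + 1) [h w^s]_k`. As `h(0) = w(0) = 0`, `h w^s` vanishes to order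
`s + 1`, so only `s ≤ k - 1` contribute; and by the Cauchy product rule, multiplying a function
vanishing at `0` by `w` acts on its coefficient vector `(c_1, …, c_n)` as the Toeplitz matrix
`A(a)`, whence `[h w^s]_k = (A(a)^s q)_k`.
-/

open Finset Filter Topology Matrix

section TaylorCoeff

variable {f g : ℂ → ℂ} {k : ℕ}

theorem taylorCoeff_zero (f : ℂ → ℂ) : taylorCoeff f 0 = f 0 := by
  simp [taylorCoeff]

theorem taylorCoeff_congr (hfg : f =ᶠ[𝓝 0] g) (k : ℕ) :
    taylorCoeff f k = taylorCoeff g k := by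
  rw [taylorCoeff, taylorCoeff, hfg.iteratedDeriv_eq]

theorem taylorCoeff_add (hf : ContDiffAt ℂ k f 0) (hg : ContDiffAt ℂ k g 0) :
    taylorCoeff (fun z => f z + g z) k = taylorCoeff f k + taylorCoeff g k := by
  simp only [taylorCoeff, iteratedDeriv_fun_add hf hg, add_div]

theorem taylorCoeff_const_mul (c : ℂ) (f : ℂ → ℂ) (k : ℕ) :
    taylorCoeff (fun z => c * f z) k = c * taylorCoeff f k := by
  simp only [taylorCoeff, iteratedDeriv_const_mul_field, mul_div_assoc]

theorem taylorCoeff_sum {ι : Type*} {s : Finset ι} {F : ι → ℂ → ℂ}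
    (hF : ∀ i ∈ s, ContDiffAt ℂ k (F i) 0) :
    taylorCoeff (fun z => ∑ i ∈ s, F i z) k = ∑ i ∈ s, taylorCoeff (F i) k := by
  simp only [taylorCoeff, iteratedDeriv_fun_sum hF, sum_div]

theorem taylorCoeff_mul (hf : ContDiffAt ℂ k f 0) (hg : ContDiffAt ℂ k g 0) :
    taylorCoeff (fun z => f z * g z) k =
      ∑ i ∈ range (k + 1), taylorCoeff f i * taylorCoeff g (k - i) := by
  rw [taylorCoeff, iteratedDeriv_fun_mul hf hg, sum_div]
  refine sum_congr rfl fun i hi => ?_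
  have hik : i ≤ k := Nat.lt_succ_iff.mp (mem_range.mp hi)
  have hchoose : (k.choose i : ℂ) ≠ 0 := Nat.cast_ne_zero.mpr (Nat.choose_pos hik).ne'
  rw [taylorCoeff, taylorCoeff, ← Nat.choose_mul_factorial_mul_factorial hik]
  push_cast
  field_simp

theorem taylorCoeff_mul_succ_of_eq_zero {j : ℕ} (hf : ContDiffAt ℂ (j + 1) f 0)
    (hg : ContDiffAt ℂ (j + 1) g 0) (hf0 : f 0 = 0) (hg0 : g 0 = 0) :
    taylorCoeff (fun z => g z * f z) (j + 1) =
      ∑ l ∈ range j, taylorCoeff f (j - l) * taylorCoeff g (l + 1) := by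
  rw [taylorCoeff_mul hg hf, sum_range_succ', sum_range_succ]
  simp only [taylorCoeff_zero, hf0, hg0, Nat.sub_self, mul_zero, zero_mul, add_zero,
    Nat.add_sub_add_right]
  exact sum_congr rfl fun l _ => mul_comm _ _

theorem taylorCoeff_mul_pow_eq_zero (hg : AnalyticAt ℂ g 0) (hf : AnalyticAt ℂ f 0)
    (hg0 : g 0 = 0) (hf0 : f 0 = 0) {s m : ℕ} (hms : m ≤ s) :
    taylorCoeff (fun z => g z * f z ^ s) m = 0 := by
  induction s generalizing m with
  | zero => simp [Nat.le_zero.mp hms, taylorCoeff_zero, hg0]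
  | succ s ih =>
    simp only [pow_succ, ← mul_assoc]
    rw [taylorCoeff_mul (hg.fun_mul (hf.fun_pow s)).contDiffAt hf.contDiffAt]
    refine sum_eq_zero fun i hi => ?_
    rcases Nat.eq_zero_or_pos (m - i) with hmi | hmi
    · rw [hmi, taylorCoeff_zero, hf0, mul_zero]
    · rw [ih (by omega), zero_mul]

theorem toeplitzA_mulVec_apply {n : ℕ} (α β : ℕ → ℂ) (j : Fin n) :
    (toeplitzA (fun i : Fin n => α (i + 1)) *ᵥ fun i => β (i + 1)) j =
      ∑ l ∈ range j, α (j - l) * β (l + 1) := by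
  have hjn := j.isLt
  have hterm (l : ℕ) (hl : l < j) : j - l - 1 + 1 = j - l := by omega
  simp only [mulVec, dotProduct, toeplitzA, of_apply, dite_eq_ite, ite_mul, zero_mul]
  rw [Fin.sum_univ_eq_sum_range (fun l => if l < j then α (j - l - 1 + 1) * β (l + 1) else 0),
    ← sum_filter]
  refine sum_congr ?_ fun l hl => by rw [hterm l (mem_range.mp hl)]
  ext l
  simp only [mem_filter, mem_range]
  omega

theorem taylorCoeff_mul_pow_eq_toeplitzA_pow_mulVec {n : ℕ}
    (hg : AnalyticAt ℂ g 0) (hf : AnalyticAt ℂ f 0) (hg0 : g 0 = 0) (hf0 : f 0 = 0)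
    (s : ℕ) (j : Fin n) :
    taylorCoeff (fun z => g z * f z ^ s) (j + 1) =
      ((toeplitzA (fun i : Fin n => taylorCoeff f (i + 1)) ^ s) *ᵥ
        fun i => taylorCoeff g (i + 1)) j := by
  induction s generalizing j with
  | zero => simp
  | succ s ih =>
    rw [pow_succ', ← mulVec_mulVec, ← funext ih, toeplitzA_mulVec_apply]
    simp only [pow_succ, ← mul_assoc]
    exact taylorCoeff_mul_succ_of_eq_zero hf.contDiffAt (hg.fun_mul (hf.fun_pow s)).contDiffAt
      hf0 (by simp [hg0])

end TaylorCoeff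

theorem one_add_two_mul_sum_Icc_mul_one_sub_sq {R : Type*} [CommRing R] (x : R) (K : ℕ) :
    (1 + 2 * ∑ s ∈ Icc 1 K, ((s : R) + 1) * x ^ s) * (1 - x) ^ 2 +
      2 * x ^ (K + 1) * ((K + 2) - (K + 1) * x) = 1 + 2 * x - x ^ 2 := by
  induction K with
  | zero => simp; ring
  | succ K ih =>
    rw [sum_Icc_succ_top (by omega), ← ih]
    push_cast
    ring

theorem one_add_div_one_sub_add_two_mul_div_one_sub_sq {𝕜 : Type*} [Field 𝕜] {x : 𝕜}
    (hx : x ≠ 1) (K : ℕ) :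
    (1 + x) / (1 - x) + 2 * x / (1 - x) ^ 2 =
      1 + 2 * ∑ s ∈ Icc 1 K, ((s : 𝕜) + 1) * x ^ s +
        x ^ (K + 1) * (2 * ((K + 2) - (K + 1) * x) / (1 - x) ^ 2) := by
  have hx' : 1 - x ≠ 0 := sub_ne_zero.mpr hx.symm
  field_simp
  linear_combination -(one_add_two_mul_sum_Icc_mul_one_sub_sq x K)

theorem lkernel_add_eq_of_ne {t : ℂ} {u : ℝ} (ht : t ≠ Complex.exp (u * Complex.I)) :
    lkernel t u + 2 * Complex.exp (u * Complex.I) * t / (Complex.exp (u * Complex.I) - t) ^ 2 =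
      (1 + t / Complex.exp (u * Complex.I)) / (1 - t / Complex.exp (u * Complex.I)) +
        2 * (t / Complex.exp (u * Complex.I)) / (1 - t / Complex.exp (u * Complex.I)) ^ 2 := by
  have hc : Complex.exp (u * Complex.I) ≠ 0 := Complex.exp_ne_zero _
  have hct : Complex.exp (u * Complex.I) - t ≠ 0 := sub_ne_zero.mpr ht.symm
  rw [lkernel]
  field_simp

theorem taylorCoeff_mul_lkernel_add {h w : ℂ → ℂ} (hh : AnalyticAt ℂ h 0)
    (hw : AnalyticAt ℂ w 0) (hh0 : h 0 = 0) (hw0 : w 0 = 0) (u : ℝ) (K : ℕ) :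
    taylorCoeff (fun z => h z * (lkernel (w z) u + 2 * Complex.exp (u * Complex.I) * w z /
        (Complex.exp (u * Complex.I) - w z) ^ 2)) (K + 1) =
      taylorCoeff h (K + 1) + 2 * ∑ s ∈ Icc 1 K, Complex.exp (-(s : ℂ) * u * Complex.I) *
        ((s : ℂ) + 1) * taylorCoeff (fun z => h z * w z ^ s) (K + 1) := by
  set c := Complex.exp (u * Complex.I)
  have hc : c ≠ 0 := Complex.exp_ne_zero _
  have hexp (s : ℕ) : Complex.exp (-(s : ℂ) * u * Complex.I) = c⁻¹ ^ s := by
    rw [← Complex.exp_neg, ← Complex.exp_nat_mul]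
    ring_nf
  have hrem : AnalyticAt ℂ
      (fun z => h z * (2 * ((K + 2) - (K + 1) * (w z / c)) / (1 - w z / c) ^ 2)) 0 := by
    fun_prop (disch := simp [hw0])
  -- A finite expansion suffices: the remainder is a multiple of `h * w ^ (K + 1)`, which has no
  -- Taylor coefficients of order `≤ K + 1`.
  have hexpand : (fun z => h z * (lkernel (w z) u + 2 * c * w z / (c - w z) ^ 2)) =ᶠ[𝓝 0]
      fun z => h z + ∑ s ∈ Icc 1 K, (2 * ((s : ℂ) + 1) * c⁻¹ ^ s) * (h z * w z ^ s) +
        h z * (2 * ((K + 2) - (K + 1) * (w z / c)) / (1 - w z / c) ^ 2) * (w z / c) ^ (K + 1) := by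
    filter_upwards [hw.continuousAt.eventually_ne (hw0 ▸ hc.symm)] with z hz
    rw [lkernel_add_eq_of_ne hz, one_add_div_one_sub_add_two_mul_div_one_sub_sq
      (div_ne_one_of_ne hz) K, mul_add, mul_add, mul_one, mul_sum, mul_sum]
    congr 1
    · exact congrArg _ (sum_congr rfl fun s _ => by ring)
    · ring
  have hxa : AnalyticAt ℂ (fun z => w z / c) 0 := hw.fun_div analyticAt_const hc
  rw [taylorCoeff_congr hexpand, taylorCoeff_add (AnalyticAt.contDiffAt (by fun_prop))
      (hrem.fun_mul (hxa.fun_pow _)).contDiffAt,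
    taylorCoeff_add hh.contDiffAt (AnalyticAt.contDiffAt (by fun_prop)),
    taylorCoeff_sum (fun s _ => AnalyticAt.contDiffAt (by fun_prop)),
    taylorCoeff_mul_pow_eq_zero hrem hxa (by simp [hh0]) (by simp [hw0]) le_rfl, add_zero, mul_sum]
  refine congrArg _ (sum_congr rfl fun s _ => ?_)
  rw [taylorCoeff_const_mul, hexp]
  ring

theorem taylorCoeff_adjoint_rhs_general
    (n : ℕ) (w : ℂ → ℂ)
    (hw : DifferentiableOn ℂ w (ball (0 : ℂ) 1)) (hw0 : w 0 = 0)
    (hnz : ∀ z ∈ ball (0 : ℂ) 1, deriv w z ≠ 0)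
    (a q : Fin n → ℂ)
    (ha : ∀ k : Fin n, a k = taylorCoeff w (k.1 + 1))
    (hq : ∀ k : Fin n, q k = taylorCoeff (fun z => z / deriv w z) (k.1 + 1)) :
    ∀ u : ℝ, ∀ k : Fin n,
      taylorCoeff (fun z => (z / deriv w z) *
          (lkernel (w z) u +
            2 * Complex.exp ((u : ℂ) * Complex.I) * w z /
              (Complex.exp ((u : ℂ) * Complex.I) - w z) ^ 2)) (k.1 + 1)
        = q k + 2 * ∑ s ∈ Finset.Icc 1 (k.1 : ℕ),
            Complex.exp (-(s : ℂ) * (u : ℂ) * Complex.I) * ((s : ℂ) + 1) *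
              ((toeplitzA a ^ s).mulVec q) k := by
  intro u k
  have h0 : (0 : ℂ) ∈ ball (0 : ℂ) 1 := mem_ball_self one_pos
  have hwa : AnalyticAt ℂ w 0 := hw.analyticAt (ball_mem_nhds 0 one_pos)
  have hha : AnalyticAt ℂ (fun z => z / deriv w z) 0 :=
    analyticAt_id.fun_div ((hw.analyticOnNhd isOpen_ball).deriv 0 h0) (hnz 0 h0)
  obtain rfl : a = fun i => taylorCoeff w (i.1 + 1) := funext ha
  obtain rfl : q = fun i => taylorCoeff (fun z => z / deriv w z) (i.1 + 1) := funext hq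
  rw [taylorCoeff_mul_lkernel_add hha hwa (by simp) hw0]
  simp only [taylorCoeff_mul_pow_eq_toeplitzA_pow_mulVec hha hwa (by simp) hw0]

/-- with `a` the first `n` Taylor coefficients of `w` and `q` those of
`z/w'(z)`, the `k`-th Taylor coefficient of
`(z/w'(z))·[(e^{iu}+w)/(e^{iu}-w) + 2e^{iu}w/(e^{iu}-w)²]` equals
`q_k + 2∑_{s=1}^{k-1} e^{-isu}(s+1)(A(a)^s q)_k`. -/
theorem taylorCoeff_adjoint_rhs
    (n : ℕ) (w : ℂ → ℂ)
    (hw : DifferentiableOn ℂ w (ball (0 : ℂ) 1)) (hw0 : w 0 = 0)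
    (hbd : ∀ z ∈ ball (0 : ℂ) 1, ‖w z‖ < 1)
    (hnz : ∀ z ∈ ball (0 : ℂ) 1, deriv w z ≠ 0)
    (a q : Fin n → ℂ)
    (ha : ∀ k : Fin n, a k = taylorCoeff w (k.1 + 1))
    (hq : ∀ k : Fin n, q k = taylorCoeff (fun z => z / deriv w z) (k.1 + 1)) :
    ∀ u : ℝ, ∀ k : Fin n,
      taylorCoeff (fun z => (z / deriv w z) *
          (lkernel (w z) u +
            2 * Complex.exp ((u : ℂ) * Complex.I) * w z /
              (Complex.exp ((u : ℂ) * Complex.I) - w z) ^ 2)) (k.1 + 1)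
        = q k + 2 * ∑ s ∈ Finset.Icc 1 (k.1 : ℕ),
            Complex.exp (-(s : ℂ) * (u : ℂ) * Complex.I) * ((s : ℂ) + 1) *
              ((toeplitzA a ^ s).mulVec q) k :=
  taylorCoeff_adjoint_rhs_general n w hw hw0 hnz a q ha hq
end

section
/- Let w : U → ℂ be holomorphic with w(0) = 0 and |w(z)| < 1 for all z ∈ U, let a_k denote the k-th Taylor coefficient of w at 0, and set a = (a_1,…,a_n) ∈ ℂ^n. Then for all u_1, u_2 ∈ ℝ, all λ ∈ ℝ, and every k with 1 ≤ k ≤ n, the k-th Taylor coefficient at 0 of the function z ↦ −w(z)·[ λ(e^{iu_1}+w(z))/(e^{iu_1}−w(z)) + (1−λ)(e^{iu_2}+w(z))/(e^{iu_2}−w(z)) ] equals −a_k − 2∑_{s=1}^{k−1} (λe^{−isu_1} + (1−λ)e^{−isu_2})(A(a)^s a)_k. (Consequently, the first n Taylor coefficients of a solution of the two-slit Löwner–Kufarev equation satisfy the phase system ȧ = −a − 2∑_{s=1}^{n−1}(λe^{−isu_1(t)}+(1−λ)e^{−isu_2(t)}) A(a)^s a.) -/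
open Complex Metric

/-! Taylor coefficients at `0` of functions analytic there multiply like formal power series
(Leibniz rule), so the computation takes place in `ℂ⟦X⟧`, with `W` the Taylor series of `w`.
A finite geometric sum gives
`-ζ p(ζ,u) = -ζ - 2 ∑_{s=1}^{K} e^{-isu} ζ^{s+1} - 2 ζ^{K+2} r(ζ)` with `r` analytic near `0`,
and the remainder does not reach the coefficient of index `K + 1` since `X^{K+2} ∣ W^{K+2}`.
Finally, as `W` has no constant term, multiplying a series without constant term by `W` acts on
its coefficients of indices `1, …, n` as the Toeplitz matrix `A(a)`; hence those of `W^{s+1}`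
form the vector `A(a)^s a`. -/

open PowerSeries Topology Finset
open scoped Matrix

noncomputable def taylorSeries (f : ℂ → ℂ) : ℂ⟦X⟧ := PowerSeries.mk (taylorCoeff f)

@[simp]
theorem coeff_taylorSeries (f : ℂ → ℂ) (m : ℕ) : coeff m (taylorSeries f) = taylorCoeff f m :=
  coeff_mk _ _

theorem constantCoeff_taylorSeries (f : ℂ → ℂ) : constantCoeff (taylorSeries f) = f 0 := by
  simp [← coeff_zero_eq_constantCoeff_apply, taylorCoeff]

theorem taylorSeries_congr {f g : ℂ → ℂ} (h : f =ᶠ[𝓝 0] g) :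
    taylorSeries f = taylorSeries g := by
  ext m
  simp only [coeff_taylorSeries, taylorCoeff, h.iteratedDeriv_eq]

theorem taylorSeries_neg (f : ℂ → ℂ) : taylorSeries (-f) = -taylorSeries f := by
  ext m
  simp [taylorCoeff, neg_div]

theorem taylorSeries_smul (c : ℂ) (f : ℂ → ℂ) :
    taylorSeries (c • f) = c • taylorSeries f := by
  ext m
  simp [taylorCoeff, mul_div_assoc]

section Analytic

variable {f g : ℂ → ℂ}

theorem taylorSeries_add (hf : AnalyticAt ℂ f 0) (hg : AnalyticAt ℂ g 0) :
    taylorSeries (f + g) = taylorSeries f + taylorSeries g := by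
  ext m
  simp [taylorCoeff, iteratedDeriv_add hf.contDiffAt hg.contDiffAt, add_div]

theorem taylorSeries_sub (hf : AnalyticAt ℂ f 0) (hg : AnalyticAt ℂ g 0) :
    taylorSeries (f - g) = taylorSeries f - taylorSeries g := by
  ext m
  simp [taylorCoeff, iteratedDeriv_sub hf.contDiffAt hg.contDiffAt, sub_div]

theorem taylorSeries_sum {ι : Type*} (s : Finset ι) {f : ι → ℂ → ℂ}
    (hf : ∀ i ∈ s, AnalyticAt ℂ (f i) 0) :
    taylorSeries (∑ i ∈ s, f i) = ∑ i ∈ s, taylorSeries (f i) := by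
  ext m
  simp [taylorCoeff, iteratedDeriv_sum fun i hi => (hf i hi).contDiffAt, sum_div]

theorem taylorCoeff_mul_s17 (hf : AnalyticAt ℂ f 0) (hg : AnalyticAt ℂ g 0) (m : ℕ) :
    taylorCoeff (f * g) m =
      ∑ p ∈ antidiagonal m, taylorCoeff f p.1 * taylorCoeff g p.2 := by
  rw [Nat.sum_antidiagonal_eq_sum_range_succ_mk, taylorCoeff,
    iteratedDeriv_mul hf.contDiffAt hg.contDiffAt, sum_div]
  refine sum_congr rfl fun i hi => ?_
  have hi : i ≤ m := Nat.lt_succ_iff.1 (mem_range.1 hi)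
  have hfac : (m.choose i : ℂ) * i.factorial * (m - i).factorial = m.factorial := by
    exact_mod_cast Nat.choose_mul_factorial_mul_factorial hi
  have hchoose : (m.choose i : ℂ) ≠ 0 := by exact_mod_cast (Nat.choose_pos hi).ne'
  simp only [taylorCoeff]
  rw [← hfac]
  field_simp

theorem taylorSeries_mul (hf : AnalyticAt ℂ f 0) (hg : AnalyticAt ℂ g 0) :
    taylorSeries (f * g) = taylorSeries f * taylorSeries g := by
  ext m
  simp [coeff_mul, taylorCoeff_mul_s17 hf hg]

theorem taylorSeries_pow (hf : AnalyticAt ℂ f 0) (s : ℕ) :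
    taylorSeries (f ^ s) = taylorSeries f ^ s := by
  induction s with
  | zero =>
    ext m
    cases m <;> simp [taylorCoeff, coeff_one, Pi.one_def, iteratedDeriv_succ']
  | succ s ih => rw [pow_succ, taylorSeries_mul (hf.pow s) hf, ih, pow_succ]

end Analytic

theorem coeff_pow_mul_eq_zero {R : Type*} [CommSemiring R] {W : R⟦X⟧} (hW : constantCoeff W = 0)
    {m n : ℕ} (hmn : m < n) (V : R⟦X⟧) : coeff m (W ^ n * V) = 0 :=
  X_pow_dvd_iff.1 (dvd_mul_of_dvd_left (pow_dvd_pow_of_dvd (X_dvd_iff.2 hW) n) V) m hmn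

/-- For `j ≥ k` both sides vanish: the truncated difference `k - j` is `0`. -/
theorem toeplitzA_coeff_apply {n : ℕ} {W : ℂ⟦X⟧} (hW : constantCoeff W = 0) (k j : Fin n) :
    toeplitzA (fun k : Fin n => coeff (k + 1) W) k j = coeff (k - j) W := by
  by_cases hjk : (j : ℕ) < k
  · simp only [toeplitzA, Matrix.of_apply, dif_pos hjk]
    congr 2
    omega
  · rw [toeplitzA, Matrix.of_apply, dif_neg hjk, Nat.sub_eq_zero_of_le (not_lt.1 hjk),
      coeff_zero_eq_constantCoeff_apply, hW]

theorem toeplitzA_mulVec_coeff {n : ℕ} {W V : ℂ⟦X⟧} (hW : constantCoeff W = 0)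
    (hV : constantCoeff V = 0) :
    toeplitzA (fun k : Fin n => coeff (k + 1) W) *ᵥ (fun k => coeff (k + 1) V) =
      fun k : Fin n => coeff (k + 1) (W * V) := by
  funext k
  have hW' : ∀ j : ℕ, k < j → coeff (k - j) W = 0 := fun j hj => by
    rw [Nat.sub_eq_zero_of_le hj.le, coeff_zero_eq_constantCoeff_apply, hW]
  calc (toeplitzA (fun k : Fin n => coeff (k + 1) W) *ᵥ fun k => coeff (k + 1) V) k
      = ∑ j ∈ range n, coeff (k - j) W * coeff (j + 1) V := by
        simp only [Matrix.mulVec, dotProduct, toeplitzA_coeff_apply hW]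
        exact Fin.sum_univ_eq_sum_range (fun j => coeff (k - j) W * coeff (j + 1) V) n
    _ = ∑ j ∈ range (k + 1), coeff (k - j) W * coeff (j + 1) V := by
        refine (sum_subset (range_subset_range.2 k.isLt) fun j _ hj => ?_).symm
        rw [hW' j (by simpa using hj), zero_mul]
    _ = coeff (k + 1) (W * V) := by
        rw [coeff_mul, Nat.sum_antidiagonal_succ', ← Nat.sum_antidiagonal_swap]
        simp only [Prod.fst_swap, Prod.snd_swap, coeff_zero_eq_constantCoeff_apply, hV, mul_zero,
          zero_add]
        exact (Nat.sum_antidiagonal_eq_sum_range_succ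
          (fun i j => coeff j W * coeff (i + 1) V) k).symm

theorem coeff_pow_succ_eq_toeplitzA_pow_mulVec {n : ℕ} {W : ℂ⟦X⟧} (hW : constantCoeff W = 0)
    (s : ℕ) :
    (fun k : Fin n => coeff (k + 1) (W ^ (s + 1))) =
      toeplitzA (fun k : Fin n => coeff (k + 1) W) ^ s *ᵥ fun k => coeff (k + 1) W := by
  induction s with
  | zero => simp
  | succ s ih =>
    have hWs : constantCoeff (W ^ (s + 1)) = 0 := by rw [map_pow, hW, zero_pow s.succ_ne_zero]
    rw [pow_succ' W, ← toeplitzA_mulVec_coeff hW hWs, ih, pow_succ', Matrix.mulVec_mulVec]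

theorem one_add_div_one_sub_eq {𝕜 : Type*} [Field 𝕜] {q : 𝕜} (hq : q ≠ 1) (K : ℕ) :
    (1 + q) / (1 - q) = 1 + 2 * ∑ s ∈ Icc 1 K, q ^ s + 2 * q ^ (K + 1) / (1 - q) := by
  have hq' : 1 - q ≠ 0 := sub_ne_zero.2 hq.symm
  induction K with
  | zero =>
    rw [Icc_eq_empty_of_lt zero_lt_one, sum_empty]
    field_simp
    ring
  | succ K ih =>
    rw [ih, sum_Icc_succ_top (by omega)]
    field_simp
    ring

theorem neg_mul_lkernel_eq {ζ : ℂ} {u : ℝ} (hζ : ζ ≠ cexp (u * I)) (K : ℕ) :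
    -ζ * lkernel ζ u = -ζ - 2 * ∑ s ∈ Icc 1 K, cexp (-s * u * I) * ζ ^ (s + 1)
      - 2 * ζ ^ (K + 2) * (cexp (-(K + 1) * u * I) / (1 - cexp (-u * I) * ζ)) := by
  have hexp (m : ℕ) : cexp (-m * u * I) = (cexp (u * I))⁻¹ ^ m := by
    rw [← exp_neg, ← exp_nat_mul]
    ring_nf
  rw [show -((K : ℂ) + 1) = -((K + 1 : ℕ) : ℂ) by push_cast; ring,
    show -(u : ℂ) * I = -((1 : ℕ) : ℂ) * u * I by push_cast; ring]
  simp only [hexp, pow_one]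
  set e := cexp (u * I)
  have he : e ≠ 0 := exp_ne_zero _
  have hq : e⁻¹ * ζ ≠ 1 := fun h => hζ (by field_simp at h; exact h)
  have hkernel : lkernel ζ u = (1 + e⁻¹ * ζ) / (1 - e⁻¹ * ζ) := by
    have : e - ζ ≠ 0 := sub_ne_zero.2 hζ.symm
    change (e + ζ) / (e - ζ) = _
    field_simp
  have hsum : ∑ s ∈ Icc 1 K, e⁻¹ ^ s * ζ ^ (s + 1) = ζ * ∑ s ∈ Icc 1 K, (e⁻¹ * ζ) ^ s := by
    rw [mul_sum]
    exact sum_congr rfl fun s _ => by ring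
  rw [hkernel, one_add_div_one_sub_eq hq K, hsum, mul_pow]
  ring

theorem AnalyticAt.lkernel {w : ℂ → ℂ} {z₀ : ℂ} (hw : AnalyticAt ℂ w z₀) {u : ℝ}
    (hu : w z₀ ≠ cexp (u * I)) : AnalyticAt ℂ (fun z => lkernel (w z) u) z₀ :=
  (analyticAt_const.add hw).div (analyticAt_const.sub hw) (sub_ne_zero.2 hu.symm)

theorem taylorCoeff_neg_mul_lkernel {w : ℂ → ℂ} (hw : AnalyticAt ℂ w 0) (hw0 : w 0 = 0) (u : ℝ)
    (K : ℕ) :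
    taylorCoeff (fun z => -(w z) * lkernel (w z) u) (K + 1) =
      -taylorCoeff w (K + 1) -
        2 * ∑ s ∈ Icc 1 K, cexp (-s * u * I) * coeff (K + 1) (taylorSeries w ^ (s + 1)) := by
  set R : ℂ → ℂ := fun z => cexp (-(K + 1) * u * I) / (1 - cexp (-u * I) * w z)
  have hR : AnalyticAt ℂ R 0 :=
    analyticAt_const.div (analyticAt_const.sub (analyticAt_const.mul hw)) (by simp [hw0])
  have hnear : ∀ᶠ z in 𝓝 0, w z ≠ cexp (u * I) :=
    hw.continuousAt.eventually_ne (by rw [hw0]; exact (exp_ne_zero _).symm)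
  have hexpand : (fun z => -(w z) * lkernel (w z) u) =ᶠ[𝓝 0]
      -w - (2 : ℂ) • ∑ s ∈ Icc 1 K, cexp (-s * u * I) • w ^ (s + 1) -
        (2 : ℂ) • (w ^ (K + 2) * R) := by
    filter_upwards [hnear] with z hz
    simp [neg_mul_lkernel_eq hz K, R, mul_assoc]
  have hconst : constantCoeff (taylorSeries w) = 0 := by rw [constantCoeff_taylorSeries, hw0]
  rw [← coeff_taylorSeries, taylorSeries_congr hexpand,
    taylorSeries_sub (by fun_prop) (by fun_prop), taylorSeries_sub (by fun_prop) (by fun_prop),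
    taylorSeries_neg, taylorSeries_smul, taylorSeries_smul,
    taylorSeries_sum _ fun s _ => by fun_prop, taylorSeries_mul (by fun_prop) hR]
  simp only [taylorSeries_smul, taylorSeries_pow hw, map_sub, map_neg, map_smul, map_sum,
    coeff_pow_mul_eq_zero hconst (Nat.lt_succ_self (K + 1)), coeff_taylorSeries, smul_eq_mul,
    mul_zero, sub_zero]

theorem taylorCoeff_two_slit_rhs_general
    (n : ℕ) (w : ℂ → ℂ)
    (hw : DifferentiableOn ℂ w (ball (0 : ℂ) 1)) (hw0 : w 0 = 0)
    (a : Fin n → ℂ) (ha : ∀ k : Fin n, a k = taylorCoeff w (k.1 + 1)) :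
    ∀ u₁ u₂ : ℝ, ∀ lam : ℝ, ∀ k : Fin n,
      taylorCoeff (fun z => -(w z) *
          ((lam : ℂ) * lkernel (w z) u₁ + (1 - (lam : ℂ)) * lkernel (w z) u₂)) (k.1 + 1)
        = -(a k) - 2 * ∑ s ∈ Finset.Icc 1 (k.1 : ℕ),
            ((lam : ℂ) * Complex.exp (-(s : ℂ) * (u₁ : ℂ) * Complex.I) +
             (1 - (lam : ℂ)) * Complex.exp (-(s : ℂ) * (u₂ : ℂ) * Complex.I)) *
              ((toeplitzA a ^ s).mulVec a) k := by
  intro u₁ u₂ lam k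
  have hwa : AnalyticAt ℂ w 0 := hw.analyticAt (ball_mem_nhds 0 one_pos)
  have hconst : constantCoeff (taylorSeries w) = 0 := by rw [constantCoeff_taylorSeries, hw0]
  obtain rfl : a = fun k : Fin n => coeff (k + 1) (taylorSeries w) :=
    funext fun k => by rw [ha, coeff_taylorSeries]
  have hslit (u : ℝ) : AnalyticAt ℂ (fun z => -(w z) * lkernel (w z) u) 0 :=
    hwa.neg.mul (hwa.lkernel (by rw [hw0]; exact (exp_ne_zero _).symm))
  have hsplit :
      (fun z => -(w z) * ((lam : ℂ) * lkernel (w z) u₁ + (1 - (lam : ℂ)) * lkernel (w z) u₂)) =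
        (lam : ℂ) • (fun z => -(w z) * lkernel (w z) u₁) +
        (1 - (lam : ℂ)) • (fun z => -(w z) * lkernel (w z) u₂) := by
    funext z
    simp only [Pi.add_apply, Pi.smul_apply, smul_eq_mul]
    ring
  rw [hsplit, ← coeff_taylorSeries,
    taylorSeries_add (hslit u₁).const_smul (hslit u₂).const_smul, taylorSeries_smul,
    taylorSeries_smul, map_add, map_smul, map_smul, coeff_taylorSeries,
    coeff_taylorSeries, taylorCoeff_neg_mul_lkernel hwa hw0, taylorCoeff_neg_mul_lkernel hwa hw0]
  simp_rw [← coeff_pow_succ_eq_toeplitzA_pow_mulVec hconst]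
  simp only [smul_eq_mul, add_mul, sum_add_distrib, mul_assoc, ← mul_sum, coeff_taylorSeries]
  ring

/-- two-slit version of the phase system: the `k`-th Taylor coefficient of
`-w·[λ p(w,u₁) + (1-λ) p(w,u₂)]` equals
`-a_k - 2∑_{s=1}^{k-1} (λe^{-isu₁} + (1-λ)e^{-isu₂})(A(a)^s a)_k`. -/
theorem taylorCoeff_two_slit_rhs
    (n : ℕ) (w : ℂ → ℂ)
    (hw : DifferentiableOn ℂ w (ball (0 : ℂ) 1)) (hw0 : w 0 = 0)
    (hbd : ∀ z ∈ ball (0 : ℂ) 1, ‖w z‖ < 1)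
    (a : Fin n → ℂ) (ha : ∀ k : Fin n, a k = taylorCoeff w (k.1 + 1)) :
    ∀ u₁ u₂ : ℝ, ∀ lam : ℝ, ∀ k : Fin n,
      taylorCoeff (fun z => -(w z) *
          ((lam : ℂ) * lkernel (w z) u₁ + (1 - (lam : ℂ)) * lkernel (w z) u₂)) (k.1 + 1)
        = -(a k) - 2 * ∑ s ∈ Finset.Icc 1 (k.1 : ℕ),
            ((lam : ℂ) * Complex.exp (-(s : ℂ) * (u₁ : ℂ) * Complex.I) +
             (1 - (lam : ℂ)) * Complex.exp (-(s : ℂ) * (u₂ : ℂ) * Complex.I)) *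
              ((toeplitzA a ^ s).mulVec a) k :=
  taylorCoeff_two_slit_rhs_general n w hw hw0 a ha
end

section
/- Fix n ≥ 1 and λ ∈ ℝ, and define the two-slit real Hamiltonian H̃ : ℂ^n × ℂ^n × ℝ × ℝ → ℝ by H̃(a,q,u_1,u_2) = 2 Re[ ∑_{k=1}^{n} (−a − 2∑_{s=1}^{n−1} (λe^{−isu_1} + (1−λ)e^{−isu_2}) A(a)^s a)_k q_k ]. Let I ⊆ ℝ be an interval, let u_1, u_2 : I → ℝ be differentiable, and let a, q : I → ℂ^n be differentiable and satisfy the two-slit phase system a'(t) = −a(t) − 2∑_{s=1}^{n−1}(λe^{−isu_1(t)}+(1−λ)e^{−isu_2(t)}) A(a(t))^s a(t) and the two-slit adjoint system q'(t) = q(t) + 2∑_{s=1}^{n−1}(λe^{−isu_1(t)}+(1−λ)e^{−isu_2(t)})(s+1)(A(a(t))ᵀ)^s q(t). If ∂H̃/∂u_1 (a(t),q(t),u_1(t),u_2(t)) = 0 and ∂H̃/∂u_2 (a(t),q(t),u_1(t),u_2(t)) = 0 for all t ∈ I, then the function t ↦ H̃(a(t), q(t), u_1(t), u_2(t)) is constant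 on I. -/
/-!
`A(a) = ∑ aᵢ Sⁱ⁺¹` is a polynomial in the nilpotent shift `S`, so the matrices `A(a)` commute
and `A(a) b = A(b) a`. Hence `d(A(a)ˢ a) = (s + 1) A(a)ˢ da`, and the adjoint system is
`q' = -Lᵀ q` for the linearization `L` in `a` of the phase field `F`, where `H̃ = 2 Re (F ⬝ q)`.
Along a solution `a' = F`, so `d/dt (F ⬝ q) = (L F + ∂ᵤF u') ⬝ q - F ⬝ Lᵀ q = ∂ᵤF u' ⬝ q` and
`dH̃/dt = u₁' ∂H̃/∂u₁ + u₂' ∂H̃/∂u₂`, which vanishes at critical controls.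
-/

open Complex

/-- The two-slit real Hamiltonian
`H̃(a,q,u₁,u₂) = 2 Re[∑_{k=1}^n (-a - 2∑_{s=1}^{n-1}(λe^{-isu₁}+(1-λ)e^{-isu₂})A(a)^s a)_k q_k]`. -/
noncomputable def realHamTwo (n : ℕ) (lam : ℝ) (a q : Fin n → ℂ) (u₁ u₂ : ℝ) : ℝ :=
  2 * (∑ k : Fin n, (-(a k) - 2 * ∑ s ∈ Finset.Icc 1 (n - 1),
      ((lam : ℂ) * Complex.exp (-(s : ℂ) * (u₁ : ℂ) * Complex.I) +
       (1 - (lam : ℂ)) * Complex.exp (-(s : ℂ) * (u₂ : ℂ) * Complex.I)) *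
        ((toeplitzA a ^ s).mulVec a) k) * q k).re

open Matrix

variable {n : ℕ}

def toeplitzShift (n : ℕ) : Matrix (Fin n) (Fin n) ℂ :=
  Matrix.of fun j k => if (j : ℕ) = k + 1 then 1 else 0

lemma toeplitzShift_pow_apply (m : ℕ) (j k : Fin n) :
    (toeplitzShift n ^ m) j k = if (j : ℕ) = k + m then 1 else 0 := by
  induction m generalizing j with
  | zero => simp [Matrix.one_apply, Fin.ext_iff]
  | succ m ih =>
    rw [pow_succ', Matrix.mul_apply]
    simp only [ih]
    simp only [toeplitzShift, Matrix.of_apply, mul_ite, mul_one, mul_zero]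
    by_cases hj : (j : ℕ) = k + (m + 1)
    · rw [if_pos hj, Finset.sum_eq_single ⟨k + m, by omega⟩ (fun l _ hl => by
        rw [if_neg (fun h => hl (Fin.ext h))]) (by simp)]
      simp; omega
    · rw [if_neg hj]
      exact Finset.sum_eq_zero fun l _ => by split_ifs <;> first | rfl | omega

lemma toeplitzA_eq_sum (a : Fin n → ℂ) :
    toeplitzA a = ∑ i, a i • toeplitzShift n ^ ((i : ℕ) + 1) := by
  ext j k
  simp only [toeplitzA, Matrix.of_apply, Matrix.sum_apply, Matrix.smul_apply,
    toeplitzShift_pow_apply, smul_eq_mul, mul_ite, mul_one, mul_zero]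
  split_ifs with hkj
  · rw [Finset.sum_eq_single ⟨(j : ℕ) - k - 1, by omega⟩ (fun i _ hi => by
      rw [if_neg (fun h => hi (Fin.ext (by simp; omega)))]) (by simp)]
    simp; omega
  · exact (Finset.sum_eq_zero fun i _ => if_neg (by omega)).symm

lemma toeplitzA_commute (a b : Fin n → ℂ) : Commute (toeplitzA a) (toeplitzA b) := by
  rw [toeplitzA_eq_sum, toeplitzA_eq_sum]
  exact Commute.sum_left _ _ _ fun i _ => Commute.sum_right _ _ _ fun i' _ =>
    ((Commute.pow_pow_self _ _ _).smul_left _).smul_right _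

lemma toeplitzA_mulVec_comm (a b : Fin n → ℂ) : toeplitzA a *ᵥ b = toeplitzA b *ᵥ a := by
  ext j
  simp only [mulVec, dotProduct, toeplitzA_eq_sum, Matrix.sum_apply, Matrix.smul_apply,
    toeplitzShift_pow_apply, smul_eq_mul, Finset.sum_mul]
  rw [Finset.sum_comm]
  refine Finset.sum_congr rfl fun i _ => Finset.sum_congr rfl fun k _ => ?_
  rw [show (k : ℕ) + (i + 1) = i + (k + 1) by omega]
  ring

lemma toeplitzA_mulVec_pow_mulVec_self (a b : Fin n → ℂ) (s : ℕ) :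
    toeplitzA b *ᵥ (toeplitzA a ^ s *ᵥ a) = toeplitzA a ^ (s + 1) *ᵥ b := by
  rw [mulVec_mulVec, ((toeplitzA_commute b a).pow_right s).eq, ← mulVec_mulVec,
    toeplitzA_mulVec_comm, mulVec_mulVec, pow_succ]

noncomputable def twoSlitDrift (a : Fin n → ℂ) (c : ℕ → ℂ) : Fin n → ℂ :=
  ∑ s ∈ Finset.Icc 1 (n - 1), c s • (toeplitzA a ^ s *ᵥ a)

noncomputable def twoSlitField (a : Fin n → ℂ) (c : ℕ → ℂ) : Fin n → ℂ :=
  -a - (2 : ℂ) • twoSlitDrift a c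

noncomputable def twoSlitLinearization (a : Fin n → ℂ) (c : ℕ → ℂ) (v : Fin n → ℂ) :
    Fin n → ℂ :=
  -v - (2 : ℂ) • ∑ s ∈ Finset.Icc 1 (n - 1), (c s * (s + 1)) • (toeplitzA a ^ s *ᵥ v)

noncomputable def twoSlitAdjointField (a q : Fin n → ℂ) (c : ℕ → ℂ) : Fin n → ℂ :=
  q + (2 : ℂ) • ∑ s ∈ Finset.Icc 1 (n - 1), (c s * (s + 1)) • ((toeplitzA a)ᵀ ^ s *ᵥ q)

lemma twoSlitField_apply (a : Fin n → ℂ) (c : ℕ → ℂ) (k : Fin n) :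
    twoSlitField a c k
      = -(a k) - 2 * ∑ s ∈ Finset.Icc 1 (n - 1), c s * (toeplitzA a ^ s *ᵥ a) k := by
  simp [twoSlitField, twoSlitDrift, Finset.sum_apply]

lemma twoSlitAdjointField_apply (a q : Fin n → ℂ) (c : ℕ → ℂ) (k : Fin n) :
    twoSlitAdjointField a q c k
      = q k + 2 * ∑ s ∈ Finset.Icc 1 (n - 1),
          c s * ((s : ℂ) + 1) * ((toeplitzA a)ᵀ ^ s *ᵥ q) k := by
  simp [twoSlitAdjointField, Finset.sum_apply]

lemma twoSlitDrift_linear_comb (a : Fin n → ℂ) (c₁ c₂ : ℕ → ℂ) (x y : ℂ) :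
    twoSlitDrift a (fun s => x * c₁ s + y * c₂ s)
      = x • twoSlitDrift a c₁ + y • twoSlitDrift a c₂ := by
  simp only [twoSlitDrift, Finset.smul_sum, ← Finset.sum_add_distrib, add_smul, mul_smul]

lemma twoSlitLinearization_dotProduct (a q : Fin n → ℂ) (c : ℕ → ℂ) (v : Fin n → ℂ) :
    twoSlitLinearization a c v ⬝ᵥ q = -(v ⬝ᵥ twoSlitAdjointField a q c) := by
  have htranspose : ∀ s, (toeplitzA a ^ s *ᵥ v) ⬝ᵥ q = v ⬝ᵥ ((toeplitzA a)ᵀ ^ s *ᵥ q) :=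
    fun s => by
      rw [dotProduct_comm, dotProduct_mulVec, ← transpose_pow, mulVec_transpose, dotProduct_comm]
  simp only [twoSlitLinearization, twoSlitAdjointField, sub_dotProduct, neg_dotProduct,
    dotProduct_add, smul_dotProduct, dotProduct_smul, sum_dotProduct, dotProduct_sum, htranspose]
  ring

section Calculus

variable {𝕜 : Type*} [NontriviallyNormedField 𝕜] {I : Set 𝕜} {t : 𝕜}

theorem HasDerivWithinAt.dotProduct {ι 𝔸 : Type*} [Fintype ι] [NormedRing 𝔸]
    [NormedAlgebra 𝕜 𝔸] {x y : 𝕜 → ι → 𝔸} {x' y' : ι → 𝔸} (hx : HasDerivWithinAt x x' I t)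
    (hy : HasDerivWithinAt y y' I t) :
    HasDerivWithinAt (fun r => x r ⬝ᵥ y r) (x' ⬝ᵥ y t + x t ⬝ᵥ y') I t := by
  unfold _root_.dotProduct
  simpa only [Finset.sum_add_distrib] using
    HasDerivWithinAt.fun_sum (u := Finset.univ) fun i _ =>
      (hasDerivWithinAt_pi.1 hx i).fun_mul (hasDerivWithinAt_pi.1 hy i)

variable [NormedAlgebra 𝕜 ℂ] {a w : 𝕜 → Fin n → ℂ} {a' w' : Fin n → ℂ}

theorem HasDerivWithinAt.toeplitzA_apply (ha : HasDerivWithinAt a a' I t) (j k : Fin n) :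
    HasDerivWithinAt (fun r => toeplitzA (a r) j k) (toeplitzA a' j k) I t := by
  simp only [toeplitzA, Matrix.of_apply]
  split_ifs
  · exact hasDerivWithinAt_pi.1 ha _
  · exact hasDerivWithinAt_const _ _ _

theorem HasDerivWithinAt.toeplitzA_mulVec (ha : HasDerivWithinAt a a' I t)
    (hw : HasDerivWithinAt w w' I t) :
    HasDerivWithinAt (fun r => toeplitzA (a r) *ᵥ w r)
      (toeplitzA a' *ᵥ w t + toeplitzA (a t) *ᵥ w') I t :=
  hasDerivWithinAt_pi.2 fun j => by
    unfold mulVec _root_.dotProduct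
    simpa only [Pi.add_apply, Finset.sum_add_distrib] using
      HasDerivWithinAt.fun_sum (u := Finset.univ) fun k _ =>
        (ha.toeplitzA_apply j k).fun_mul (hasDerivWithinAt_pi.1 hw k)

theorem HasDerivWithinAt.toeplitzA_pow_mulVec_self (ha : HasDerivWithinAt a a' I t) (s : ℕ) :
    HasDerivWithinAt (fun r => toeplitzA (a r) ^ s *ᵥ a r)
      (((s : ℂ) + 1) • (toeplitzA (a t) ^ s *ᵥ a')) I t := by
  induction s with
  | zero => simpa using ha
  | succ s ih =>
    simp_rw [pow_succ', ← mulVec_mulVec]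
    convert ha.toeplitzA_mulVec ih using 1
    rw [toeplitzA_mulVec_pow_mulVec_self, mulVec_smul, mulVec_mulVec, ← pow_succ']
    push_cast
    module

theorem HasDerivWithinAt.twoSlitField {c : 𝕜 → ℕ → ℂ} {c' : ℕ → ℂ}
    (ha : HasDerivWithinAt a a' I t) (hc : ∀ s, HasDerivWithinAt (fun r => c r s) (c' s) I t) :
    HasDerivWithinAt (fun r => twoSlitField (a r) (c r))
      (twoSlitLinearization (a t) (c t) a' - (2 : ℂ) • twoSlitDrift (a t) c') I t := by
  have hdrift : HasDerivWithinAt (fun r => twoSlitDrift (a r) (c r))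
      (∑ s ∈ Finset.Icc 1 (n - 1), (c t s • (((s : ℂ) + 1) • (toeplitzA (a t) ^ s *ᵥ a'))
        + c' s • (toeplitzA (a t) ^ s *ᵥ a t))) I t :=
    HasDerivWithinAt.fun_sum fun s _ => (hc s).fun_smul (ha.toeplitzA_pow_mulVec_self s)
  refine (ha.fun_neg.fun_sub (hdrift.fun_const_smul (2 : ℂ))).congr_deriv ?_
  simp only [twoSlitLinearization, twoSlitDrift, Finset.sum_add_distrib, smul_smul]
  module

theorem hasDerivWithinAt_twoSlitField_dotProduct_of_adjoint {q : 𝕜 → Fin n → ℂ}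
    {c : 𝕜 → ℕ → ℂ} {c' : ℕ → ℂ} (ha : HasDerivWithinAt a (twoSlitField (a t) (c t)) I t)
    (hq : HasDerivWithinAt q (twoSlitAdjointField (a t) (q t) (c t)) I t)
    (hc : ∀ s, HasDerivWithinAt (fun r => c r s) (c' s) I t) :
    HasDerivWithinAt (fun r => twoSlitField (a r) (c r) ⬝ᵥ q r)
      (-2 * (twoSlitDrift (a t) c' ⬝ᵥ q t)) I t :=
  ((ha.twoSlitField hc).dotProduct hq).congr_deriv <| by
    rw [sub_dotProduct, twoSlitLinearization_dotProduct, smul_dotProduct, smul_eq_mul]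
    ring

theorem hasDerivWithinAt_twoSlitField_dotProduct_const (a q : Fin n → ℂ) {c : 𝕜 → ℕ → ℂ}
    {c' : ℕ → ℂ} (hc : ∀ s, HasDerivWithinAt (fun r => c r s) (c' s) I t) :
    HasDerivWithinAt (fun r => twoSlitField a (c r) ⬝ᵥ q)
      (-2 * (twoSlitDrift a c' ⬝ᵥ q)) I t :=
  (((hasDerivWithinAt_const t I a).twoSlitField hc).dotProduct
    (hasDerivWithinAt_const t I q)).congr_deriv <| by
    simp [twoSlitLinearization]

end Calculus

section Hamiltonian

variable {I : Set ℝ} {t : ℝ}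

theorem HasDerivWithinAt.re {f : ℝ → ℂ} {f' : ℂ} (hf : HasDerivWithinAt f f' I t) :
    HasDerivWithinAt (fun r => (f r).re) f'.re I t :=
  Complex.reCLM.hasFDerivAt.comp_hasDerivWithinAt t hf

noncomputable def slitPhase (s : ℕ) (v : ℝ) : ℂ :=
  Complex.exp (-(s : ℂ) * (v : ℂ) * Complex.I)

noncomputable def slitPhaseDeriv (s : ℕ) (v : ℝ) : ℂ := -(s : ℂ) * Complex.I * slitPhase s v

theorem HasDerivWithinAt.slitPhase {u : ℝ → ℝ} {d : ℝ} (hu : HasDerivWithinAt u d I t)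
    (s : ℕ) :
    HasDerivWithinAt (fun r => slitPhase s (u r)) (d * slitPhaseDeriv s (u t)) I t :=
  ((hu.ofReal_comp.const_mul (-(s : ℂ))).mul_const Complex.I).cexp.congr_deriv <| by
    simp only [slitPhaseDeriv, _root_.slitPhase]
    ring

noncomputable def twoSlitCoeff (lam u₁ u₂ : ℝ) (s : ℕ) : ℂ :=
  lam * slitPhase s u₁ + (1 - lam) * slitPhase s u₂

theorem hasDerivWithinAt_twoSlitCoeff (lam : ℝ) {u₁ u₂ : ℝ → ℝ} {d₁ d₂ : ℝ}
    (hu₁ : HasDerivWithinAt u₁ d₁ I t) (hu₂ : HasDerivWithinAt u₂ d₂ I t) (s : ℕ) :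
    HasDerivWithinAt (fun r => twoSlitCoeff lam (u₁ r) (u₂ r) s)
      (d₁ * (lam * slitPhaseDeriv s (u₁ t)) + d₂ * ((1 - lam) * slitPhaseDeriv s (u₂ t)))
      I t :=
  (((hu₁.slitPhase s).const_mul (lam : ℂ)).fun_add
    ((hu₂.slitPhase s).const_mul (1 - (lam : ℂ)))).congr_deriv (by ring)

theorem realHamTwo_eq (n : ℕ) (lam : ℝ) (a q : Fin n → ℂ) (u₁ u₂ : ℝ) :
    realHamTwo n lam a q u₁ u₂ = 2 * (twoSlitField a (twoSlitCoeff lam u₁ u₂) ⬝ᵥ q).re := by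
  simp only [realHamTwo, dotProduct, twoSlitField_apply]
  rfl

noncomputable def twoSlitHamPartial (a q : Fin n → ℂ) (μ : ℂ) (v : ℝ) : ℝ :=
  2 * (-2 * (twoSlitDrift a (fun s => μ * slitPhaseDeriv s v) ⬝ᵥ q)).re

theorem hasDerivAt_realHamTwo_left (lam : ℝ) (a q : Fin n → ℂ) (v w : ℝ) :
    HasDerivAt (fun v => realHamTwo n lam a q v w) (twoSlitHamPartial a q lam v) v := by
  have hc := hasDerivWithinAt_twoSlitCoeff lam (hasDerivWithinAt_id v Set.univ)
    (hasDerivWithinAt_const v Set.univ w)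
  simp only [id, Complex.ofReal_one, Complex.ofReal_zero, one_mul, zero_mul, add_zero] at hc
  simp only [realHamTwo_eq, ← hasDerivWithinAt_univ]
  exact ((hasDerivWithinAt_twoSlitField_dotProduct_const a q hc).re.const_mul 2)

theorem hasDerivAt_realHamTwo_right (lam : ℝ) (a q : Fin n → ℂ) (v w : ℝ) :
    HasDerivAt (fun w => realHamTwo n lam a q v w) (twoSlitHamPartial a q (1 - lam) w) w := by
  have hc := hasDerivWithinAt_twoSlitCoeff lam (hasDerivWithinAt_const w Set.univ v)
    (hasDerivWithinAt_id w Set.univ)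
  simp only [id, Complex.ofReal_one, Complex.ofReal_zero, one_mul, zero_mul, zero_add] at hc
  simp only [realHamTwo_eq, ← hasDerivWithinAt_univ]
  exact ((hasDerivWithinAt_twoSlitField_dotProduct_const a q hc).re.const_mul 2)

theorem hasDerivWithinAt_realHamTwo_of_adjoint (lam : ℝ) {a q : ℝ → Fin n → ℂ}
    {u₁ u₂ : ℝ → ℝ} {d₁ d₂ : ℝ} (hu₁ : HasDerivWithinAt u₁ d₁ I t)
    (hu₂ : HasDerivWithinAt u₂ d₂ I t)
    (ha : HasDerivWithinAt a (twoSlitField (a t) (twoSlitCoeff lam (u₁ t) (u₂ t))) I t)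
    (hq : HasDerivWithinAt q
      (twoSlitAdjointField (a t) (q t) (twoSlitCoeff lam (u₁ t) (u₂ t))) I t) :
    HasDerivWithinAt (fun r => realHamTwo n lam (a r) (q r) (u₁ r) (u₂ r))
      (d₁ * twoSlitHamPartial (a t) (q t) lam (u₁ t)
        + d₂ * twoSlitHamPartial (a t) (q t) (1 - lam) (u₂ t)) I t := by
  have h := (hasDerivWithinAt_twoSlitField_dotProduct_of_adjoint
    (c := fun r => twoSlitCoeff lam (u₁ r) (u₂ r)) ha hq
    (hasDerivWithinAt_twoSlitCoeff lam hu₁ hu₂)).re.const_mul 2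
  simp only [← realHamTwo_eq] at h
  refine h.congr_deriv ?_
  simp only [twoSlitDrift_linear_comb, twoSlitHamPartial, add_dotProduct, smul_dotProduct,
    smul_eq_mul, mul_add, Complex.add_re, mul_left_comm (-2 : ℂ) (d₁ : ℂ),
    mul_left_comm (-2 : ℂ) (d₂ : ℂ), Complex.re_ofReal_mul]
  ring

end Hamiltonian

theorem Convex.is_const_of_hasDerivWithinAt_zero {E : Type*} [NormedAddCommGroup E]
    [NormedSpace ℝ E] {I : Set ℝ} {f : ℝ → E} (hI : Convex ℝ I)
    (hf : ∀ t ∈ I, HasDerivWithinAt f 0 I t) {x y : ℝ} (hx : x ∈ I) (hy : y ∈ I) :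
    f x = f y := by
  have h := hI.norm_image_sub_le_of_norm_hasDerivWithin_le (C := 0) hf (fun _ _ => by simp)
    hy hx
  rwa [zero_mul, norm_le_zero_iff, sub_eq_zero] at h

theorem two_slit_hamiltonian_constant_along_critical_trajectory_general
    (n : ℕ) (lam : ℝ) (I : Set ℝ) (hI : Convex ℝ I)
    (u₁ u₂ : ℝ → ℝ)
    (hu₁ : ∀ t ∈ I, DifferentiableWithinAt ℝ u₁ I t)
    (hu₂ : ∀ t ∈ I, DifferentiableWithinAt ℝ u₂ I t)
    (a q : ℝ → Fin n → ℂ)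
    (ha : ∀ t ∈ I, ∀ k : Fin n,
      HasDerivWithinAt (fun s => a s k)
        (-(a t k) - 2 * ∑ s ∈ Finset.Icc 1 (n - 1),
          ((lam : ℂ) * Complex.exp (-(s : ℂ) * (u₁ t : ℂ) * Complex.I) +
           (1 - (lam : ℂ)) * Complex.exp (-(s : ℂ) * (u₂ t : ℂ) * Complex.I)) *
            ((toeplitzA (a t) ^ s).mulVec (a t)) k) I t)
    (hq : ∀ t ∈ I, ∀ k : Fin n,
      HasDerivWithinAt (fun s => q s k)
        (q t k + 2 * ∑ s ∈ Finset.Icc 1 (n - 1),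
          ((lam : ℂ) * Complex.exp (-(s : ℂ) * (u₁ t : ℂ) * Complex.I) +
           (1 - (lam : ℂ)) * Complex.exp (-(s : ℂ) * (u₂ t : ℂ) * Complex.I)) * ((s : ℂ) + 1) *
            (((toeplitzA (a t)).transpose ^ s).mulVec (q t)) k) I t)
    (hcrit₁ : ∀ t ∈ I, deriv (fun v => realHamTwo n lam (a t) (q t) v (u₂ t)) (u₁ t) = 0)
    (hcrit₂ : ∀ t ∈ I, deriv (fun v => realHamTwo n lam (a t) (q t) (u₁ t) v) (u₂ t) = 0) :
    ∀ t ∈ I, ∀ t' ∈ I,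
      realHamTwo n lam (a t) (q t) (u₁ t) (u₂ t)
        = realHamTwo n lam (a t') (q t') (u₁ t') (u₂ t') := by
  have hstationary : ∀ t ∈ I,
      HasDerivWithinAt (fun r => realHamTwo n lam (a r) (q r) (u₁ r) (u₂ r)) 0 I t := by
    intro t ht
    have ha' : HasDerivWithinAt a (twoSlitField (a t) (twoSlitCoeff lam (u₁ t) (u₂ t))) I t :=
      hasDerivWithinAt_pi.2 fun k => by rw [twoSlitField_apply]; exact ha t ht k
    have hq' : HasDerivWithinAt q
        (twoSlitAdjointField (a t) (q t) (twoSlitCoeff lam (u₁ t) (u₂ t))) I t :=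
      hasDerivWithinAt_pi.2 fun k => by rw [twoSlitAdjointField_apply]; exact hq t ht k
    have hpartial₁ := hcrit₁ t ht
    have hpartial₂ := hcrit₂ t ht
    rw [(hasDerivAt_realHamTwo_left lam (a t) (q t) (u₁ t) (u₂ t)).deriv] at hpartial₁
    rw [(hasDerivAt_realHamTwo_right lam (a t) (q t) (u₁ t) (u₂ t)).deriv] at hpartial₂
    simpa only [hpartial₁, hpartial₂, mul_zero, add_zero] using
      hasDerivWithinAt_realHamTwo_of_adjoint lam
        (hu₁ t ht).hasDerivWithinAt (hu₂ t ht).hasDerivWithinAt ha' hq'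
  intro t ht t' ht'
  exact hI.is_const_of_hasDerivWithinAt_zero hstationary ht ht'

/-- along a trajectory of the two-slit phase/adjoint system on which both
criticality conditions `∂H̃/∂u₁ = ∂H̃/∂u₂ = 0` hold, `H̃(a(t),q(t),u₁(t),u₂(t))` is constant. -/
theorem two_slit_hamiltonian_constant_along_critical_trajectory
    (n : ℕ) (hn : 1 ≤ n) (lam : ℝ) (I : Set ℝ) (hI : Convex ℝ I)
    (u₁ u₂ : ℝ → ℝ)
    (hu₁ : ∀ t ∈ I, DifferentiableWithinAt ℝ u₁ I t)
    (hu₂ : ∀ t ∈ I, DifferentiableWithinAt ℝ u₂ I t)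
    (a q : ℝ → Fin n → ℂ)
    (ha : ∀ t ∈ I, ∀ k : Fin n,
      HasDerivWithinAt (fun s => a s k)
        (-(a t k) - 2 * ∑ s ∈ Finset.Icc 1 (n - 1),
          ((lam : ℂ) * Complex.exp (-(s : ℂ) * (u₁ t : ℂ) * Complex.I) +
           (1 - (lam : ℂ)) * Complex.exp (-(s : ℂ) * (u₂ t : ℂ) * Complex.I)) *
            ((toeplitzA (a t) ^ s).mulVec (a t)) k) I t)
    (hq : ∀ t ∈ I, ∀ k : Fin n,
      HasDerivWithinAt (fun s => q s k)
        (q t k + 2 * ∑ s ∈ Finset.Icc 1 (n - 1),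
          ((lam : ℂ) * Complex.exp (-(s : ℂ) * (u₁ t : ℂ) * Complex.I) +
           (1 - (lam : ℂ)) * Complex.exp (-(s : ℂ) * (u₂ t : ℂ) * Complex.I)) * ((s : ℂ) + 1) *
            (((toeplitzA (a t)).transpose ^ s).mulVec (q t)) k) I t)
    (hcrit₁ : ∀ t ∈ I, deriv (fun v => realHamTwo n lam (a t) (q t) v (u₂ t)) (u₁ t) = 0)
    (hcrit₂ : ∀ t ∈ I, deriv (fun v => realHamTwo n lam (a t) (q t) (u₁ t) v) (u₂ t) = 0) :
    ∀ t ∈ I, ∀ t' ∈ I,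
      realHamTwo n lam (a t) (q t) (u₁ t) (u₂ t)
        = realHamTwo n lam (a t') (q t') (u₁ t') (u₂ t') :=
  two_slit_hamiltonian_constant_along_critical_trajectory_general n lam I hI u₁ u₂ hu₁ hu₂ a q ha hq
    hcrit₁ hcrit₂
end
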